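/- arXiv:1207.5114 — 2 statements merged into one kernel-verified Lean document; each statement's English description precedes it below -/
import Mathlib

section
/- (Ptolemaean inequality in ∂𝐇²_ℂ, first inequality) Let p₁, p₂, p₃, p₄ ∈ ℂ³ be nonzero null vectors (⟨pᵢ,pᵢ⟩ = 0) whose pairwise Hermitian pairings are nonzero (⟨pᵢ,pⱼ⟩ ≠ 0 for i ≠ j). Setting 𝕏₁ = 𝕏(p₁,p₂,p₃,p₄) and 𝕏₂ = 𝕏(p₁,p₃,p₂,p₄), one has |𝕏₁|^{1/2} + |𝕏₂|^{1/2} ≥ 1. -/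
/-!
Four vectors in `ℂ³` are linearly dependent, so their Gram matrix `(⟨pᵢ, pⱼ⟩)` is singular.
For null vectors it is Hermitian with zero diagonal, and expanding its determinant gives
`x² + y² + z² = 2 Σ Re(…)` where `x = |⟨p₁,p₂⟩⟨p₃,p₄⟩|`, `y = |⟨p₁,p₃⟩⟨p₂,p₄⟩|`,
`z = |⟨p₁,p₄⟩⟨p₂,p₃⟩|`; bounding the real parts yields `x² + y² + z² ≤ 2(xy + yz + zx)`.
By Heron's formula this says that `√x`, `√y`, `√z` satisfy the triangle inequalities, and
`√z ≤ √x + √y` is the claim since `|𝕏₁| = y / z` and `|𝕏₂| = x / z`.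
-/

open ComplexConjugate

/-- The Hermitian form of signature (2,1) on ℂ³:
`⟨z,w⟩ = z₁·conj(w₃) + z₂·conj(w₂) + z₃·conj(w₁)`. -/
noncomputable def herm (z w : Fin 3 → ℂ) : ℂ :=
  z 0 * starRingEnd ℂ (w 2) + z 1 * starRingEnd ℂ (w 1) + z 2 * starRingEnd ℂ (w 0)

/-- The Korányi–Reimann complex cross-ratio. -/
noncomputable def crossRatio (p₁ p₂ p₃ p₄ : Fin 3 → ℂ) : ℂ :=
  (herm p₃ p₁ * herm p₄ p₂) / (herm p₄ p₁ * herm p₃ p₂)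

lemma herm_conj_symm (z w : Fin 3 → ℂ) : conj (herm w z) = herm z w := by
  simp only [herm, map_add, map_mul, Complex.conj_conj]
  ring

lemma norm_herm_comm (z w : Fin 3 → ℂ) : ‖herm w z‖ = ‖herm z w‖ := by
  rw [← herm_conj_symm, Complex.norm_conj]

lemma herm_sum_smul_left {ι : Type*} (s : Finset ι) (g : ι → ℂ) (q : ι → Fin 3 → ℂ)
    (w : Fin 3 → ℂ) : herm (∑ i ∈ s, g i • q i) w = ∑ i ∈ s, g i * herm (q i) w := by
  simp only [herm, Finset.sum_apply, Pi.smul_apply, smul_eq_mul, Finset.sum_mul,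
    ← Finset.sum_add_distrib]
  exact Finset.sum_congr rfl fun i _ => by ring

lemma norm_crossRatio (p₁ p₂ p₃ p₄ : Fin 3 → ℂ) :
    ‖crossRatio p₁ p₂ p₃ p₄‖ =
      ‖herm p₁ p₃‖ * ‖herm p₂ p₄‖ / (‖herm p₁ p₄‖ * ‖herm p₂ p₃‖) := by
  simp only [crossRatio, norm_div, norm_mul, norm_herm_comm p₁, norm_herm_comm p₂]

noncomputable def hermGram {ι : Type*} (p : ι → Fin 3 → ℂ) : Matrix ι ι ℂ :=
  Matrix.of fun i j => herm (p i) (p j)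

lemma isHermitian_hermGram {ι : Type*} (p : ι → Fin 3 → ℂ) : (hermGram p).IsHermitian :=
  Matrix.IsHermitian.ext fun i j => herm_conj_symm (p i) (p j)

lemma det_hermGram_eq_zero {ι : Type*} [Fintype ι] [DecidableEq ι] (hι : 3 < Fintype.card ι)
    (p : ι → Fin 3 → ℂ) : (hermGram p).det = 0 := by
  have hdep : ¬ LinearIndependent ℂ p := fun h => by
    simpa using hι.trans_le h.fintype_card_le_finrank
  obtain ⟨g, hg, i, hgi⟩ := Fintype.not_linearIndependent_iff.mp hdep
  refine Matrix.exists_vecMul_eq_zero_iff.mp ⟨g, fun h => hgi (congrFun h i), funext fun j => ?_⟩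
  calc Matrix.vecMul g (hermGram p) j = ∑ i, g i * herm (p i) (p j) := rfl
    _ = herm (∑ i, g i • p i) (p j) := (herm_sum_smul_left _ g p (p j)).symm
    _ = 0 := by rw [hg]; simp [herm]

theorem Matrix.det_fin_four {R : Type*} [CommRing R] (M : Matrix (Fin 4) (Fin 4) R) :
    M.det =
      M 0 0 * (M 1 1 * (M 2 2 * M 3 3 - M 2 3 * M 3 2) - M 1 2 * (M 2 1 * M 3 3 - M 2 3 * M 3 1)
        + M 1 3 * (M 2 1 * M 3 2 - M 2 2 * M 3 1))
      - M 0 1 * (M 1 0 * (M 2 2 * M 3 3 - M 2 3 * M 3 2) - M 1 2 * (M 2 0 * M 3 3 - M 2 3 * M 3 0)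
        + M 1 3 * (M 2 0 * M 3 2 - M 2 2 * M 3 0))
      + M 0 2 * (M 1 0 * (M 2 1 * M 3 3 - M 2 3 * M 3 1) - M 1 1 * (M 2 0 * M 3 3 - M 2 3 * M 3 0)
        + M 1 3 * (M 2 0 * M 3 1 - M 2 1 * M 3 0))
      - M 0 3 * (M 1 0 * (M 2 1 * M 3 2 - M 2 2 * M 3 1) - M 1 1 * (M 2 0 * M 3 2 - M 2 2 * M 3 0)
        + M 1 2 * (M 2 0 * M 3 1 - M 2 1 * M 3 0)) := by
  simp [Matrix.det_succ_row_zero (n := 3), Fin.sum_univ_four, Matrix.det_fin_three, Fin.succAbove]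
  ring

lemma Matrix.IsHermitian.ptolemy_sq_le_of_det_eq_zero {M : Matrix (Fin 4) (Fin 4) ℂ}
    (hM : M.IsHermitian) (hdiag : ∀ i, M i i = 0) (hdet : M.det = 0) :
    (‖M 0 1‖ * ‖M 2 3‖) ^ 2 + (‖M 0 2‖ * ‖M 1 3‖) ^ 2 + (‖M 0 3‖ * ‖M 1 2‖) ^ 2 ≤
      2 * ((‖M 0 1‖ * ‖M 2 3‖) * (‖M 0 2‖ * ‖M 1 3‖) + (‖M 0 2‖ * ‖M 1 3‖) * (‖M 0 3‖ * ‖M 1 2‖)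
        + (‖M 0 3‖ * ‖M 1 2‖) * (‖M 0 1‖ * ‖M 2 3‖)) := by
  have hconj : ∀ i j, M j i = conj (M i j) := fun i j => (hM.apply j i).symm
  rw [Matrix.det_fin_four] at hdet
  simp only [hdiag, hconj 0 1, hconj 0 2, hconj 0 3, hconj 1 2, hconj 1 3, hconj 2 3] at hdet
  generalize M 0 1 = a, M 0 2 = b, M 0 3 = c, M 1 2 = d, M 1 3 = e, M 2 3 = f at hdet ⊢
  have hre : (‖a‖ * ‖f‖) ^ 2 + (‖b‖ * ‖e‖) ^ 2 + (‖c‖ * ‖d‖) ^ 2 =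
      2 * (a * d * f * conj c).re + 2 * (a * e * conj f * conj b).re
        + 2 * (b * conj d * e * conj c).re := by
    have : (((‖a‖ * ‖f‖) ^ 2 + (‖b‖ * ‖e‖) ^ 2 + (‖c‖ * ‖d‖) ^ 2 : ℝ) : ℂ) =
        ((2 * (a * d * f * conj c).re + 2 * (a * e * conj f * conj b).re
          + 2 * (b * conj d * e * conj c).re : ℝ) : ℂ) := by
      simp only [Complex.re_eq_add_conj, Complex.ofReal_add, Complex.ofReal_pow,
        Complex.ofReal_mul, Complex.ofReal_ofNat, mul_pow, ← Complex.mul_conj', map_mul,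
        Complex.conj_conj]
      linear_combination hdet
    exact_mod_cast this
  have hle : ∀ z w u v : ℂ, (z * w * u * v).re ≤ ‖z‖ * ‖w‖ * ‖u‖ * ‖v‖ := fun z w u v =>
    (Complex.re_le_norm _).trans_eq (by simp only [norm_mul])
  have h1 := hle a d f (conj c)
  have h2 := hle a e (conj f) (conj b)
  have h3 := hle b (conj d) e (conj c)
  simp only [Complex.norm_conj] at h1 h2 h3
  linarith

lemma one_le_sqrt_div_add_sqrt_div {x y z : ℝ} (hx : 0 ≤ x) (hy : 0 ≤ y) (hz : 0 < z)
    (h : x ^ 2 + y ^ 2 + z ^ 2 ≤ 2 * (x * y + y * z + z * x)) : 1 ≤ √(x / z) + √(y / z) := by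
  obtain ⟨u, hu0, rfl⟩ : ∃ u, 0 ≤ u ∧ x = u ^ 2 * z := ⟨√(x / z), Real.sqrt_nonneg _, by
    rw [Real.sq_sqrt (div_nonneg hx hz.le)]; field_simp⟩
  obtain ⟨v, hv0, rfl⟩ : ∃ v, 0 ≤ v ∧ y = v ^ 2 * z := ⟨√(y / z), Real.sqrt_nonneg _, by
    rw [Real.sq_sqrt (div_nonneg hy hz.le)]; field_simp⟩
  -- Heron: `2(xy + yz + zx) - (x² + y² + z²)` is `z²` times this product.
  have heron : 0 ≤ (u + v + 1) * (u + v - 1) * (1 + u - v) * (1 - u + v) := by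
    refine nonneg_of_mul_nonneg_right (a := z ^ 2) ?_ (by positivity)
    linear_combination h
  rw [mul_div_cancel_right₀ _ hz.ne', mul_div_cancel_right₀ _ hz.ne', Real.sqrt_sq hu0,
    Real.sqrt_sq hv0]
  by_contra! hlt
  have hpos : 0 < (u + v + 1) * (1 + u - v) * (1 - u + v) :=
    mul_pos (mul_pos (by linarith) (by linarith)) (by linarith)
  linarith [mul_neg_of_neg_of_pos (sub_neg.mpr hlt) hpos]

theorem ptolemaean_inequality_boundary_first_general
    (p : Fin 4 → Fin 3 → ℂ)
    (hnull : ∀ i, herm (p i) (p i) = 0)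
    (hpair : ∀ i j, i ≠ j → herm (p i) (p j) ≠ 0) :
    1 ≤ Real.sqrt ‖crossRatio (p 0) (p 1) (p 2) (p 3)‖
        + Real.sqrt ‖crossRatio (p 0) (p 2) (p 1) (p 3)‖ := by
  have hptolemy := (isHermitian_hermGram p).ptolemy_sq_le_of_det_eq_zero hnull
    (det_hermGram_eq_zero (by simp) p)
  simp only [hermGram, Matrix.of_apply] at hptolemy
  have hz : 0 < ‖herm (p 0) (p 3)‖ * ‖herm (p 1) (p 2)‖ :=
    mul_pos (norm_pos_iff.mpr (hpair 0 3 (by decide))) (norm_pos_iff.mpr (hpair 1 2 (by decide)))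
  rw [norm_crossRatio, norm_crossRatio, norm_herm_comm (p 1) (p 2)]
  exact one_le_sqrt_div_add_sqrt_div (by positivity) (by positivity) hz (by linarith [hptolemy])

theorem ptolemaean_inequality_boundary_first
    (p : Fin 4 → Fin 3 → ℂ)
    (hne : ∀ i, p i ≠ 0)
    (hnull : ∀ i, herm (p i) (p i) = 0)
    (hpair : ∀ i j, i ≠ j → herm (p i) (p j) ≠ 0) :
    1 ≤ Real.sqrt ‖crossRatio (p 0) (p 1) (p 2) (p 3)‖
        + Real.sqrt ‖crossRatio (p 0) (p 2) (p 1) (p 3)‖ :=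
  ptolemaean_inequality_boundary_first_general p hnull hpair
end

section
/- Let x₁, x₂, x₃ ∈ ℂ be a point of the cross-ratio variety, i.e. |x₂| = |x₁|·|x₃| and 2|x₁|²·Re(x₃) = |x₁|² + |x₂|² − 2Re(x₁ + x₂) + 1. Then the product ((|x₁|^{1/2} − |x₂|^{1/2})² − 1)·((|x₁|^{1/2} + |x₂|^{1/2})² − 1) is ≤ 0. -/
/-! With `a = ‖x₁‖`, `b = ‖x₂‖`, the product equals `(a + b - 1)² - 4ab`. On the variety,
bounding `Re x₃ ≤ ‖x₃‖ = b / a` and `Re (x₁ + x₂) ≤ a + b` in the second equation gives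
`a² + b² + 1 ≤ 2(a + b) + 2ab`, which is exactly `(a + b - 1)² ≤ 4ab`. -/

open Real

theorem sqrt_sub_sqrt_sq_sub_one_mul_sqrt_add_sqrt_sq_sub_one {a b : ℝ} (ha : 0 ≤ a) (hb : 0 ≤ b) :
    ((√a - √b) ^ 2 - 1) * ((√a + √b) ^ 2 - 1) = (a + b - 1) ^ 2 - 4 * a * b := by
  conv_rhs => rw [← sq_sqrt ha, ← sq_sqrt hb]
  ring

theorem norm_add_norm_sub_one_sq_le_of_mem_crossRatioVariety {x₁ x₂ x₃ : ℂ}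
    (h1 : ‖x₂‖ = ‖x₁‖ * ‖x₃‖)
    (h2 : 2 * ‖x₁‖ ^ 2 * x₃.re = ‖x₁‖ ^ 2 + ‖x₂‖ ^ 2 - 2 * (x₁ + x₂).re + 1) :
    (‖x₁‖ + ‖x₂‖ - 1) ^ 2 ≤ 4 * ‖x₁‖ * ‖x₂‖ := by
  have hx₃ : ‖x₁‖ ^ 2 * x₃.re ≤ ‖x₁‖ * ‖x₂‖ :=
    calc ‖x₁‖ ^ 2 * x₃.re ≤ ‖x₁‖ ^ 2 * ‖x₃‖ := by gcongr; exact Complex.re_le_norm x₃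
      _ = ‖x₁‖ * ‖x₂‖ := by rw [h1]; ring
  have hx₁₂ : (x₁ + x₂).re ≤ ‖x₁‖ + ‖x₂‖ :=
    (Complex.re_le_norm _).trans (norm_add_le x₁ x₂)
  linarith

theorem cross_ratio_variety_product_nonpos
    (x₁ x₂ x₃ : ℂ)
    (h1 : ‖x₂‖ = ‖x₁‖ * ‖x₃‖)
    (h2 : 2 * ‖x₁‖ ^ 2 * x₃.re
      = ‖x₁‖ ^ 2 + ‖x₂‖ ^ 2 - 2 * (x₁ + x₂).re + 1) :
    ((Real.sqrt (‖x₁‖) - Real.sqrt (‖x₂‖)) ^ 2 - 1)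
      * ((Real.sqrt (‖x₁‖) + Real.sqrt (‖x₂‖)) ^ 2 - 1) ≤ 0 := by
  rw [sqrt_sub_sqrt_sq_sub_one_mul_sqrt_add_sqrt_sq_sub_one (norm_nonneg _) (norm_nonneg _),
    sub_nonpos]
  exact norm_add_norm_sub_one_sq_le_of_mem_crossRatioVariety h1 h2
end
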